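/- Let N ≥ 1 and let U be the N×N matrix with entries u(n,k) = ((−1)^n/(2n)!) c(n,k), c(n,k) = (2/4^k) ∑_{j=1}^{k} (−1)^{k−j} C(2k, k−j) (2j)^{2n}. Let L be the N×N lower triangular matrix with l(n,k) = 2^{2k+1} C(k, n−k) for k ≤ n ≤ min(2k, N) and 0 otherwise, and let D be the diagonal matrix with d(i,i) = 2^{2i+1}. Then UL = DU. -/

import Mathlib

/-!
Write `M_j(P, s) = ∑ₑ [Xᵉ]P · (e - s)ʲ` (`coeffMoment j s P`) for the moments of the
coefficient sequence of a polynomial `P`. For `n ≥ 1` the palindromy of `(X - 1)^{2k}` gives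
`c(n,k) = 4^{n-k} M_{2n}((X - 1)^{2k}, k)`. Multiplying by `X^a` moves the centre by `a`, and
substituting `X ↦ X²` doubles all positions, which multiplies `M_{2n}` by `4^n`. Hence the identity
`(X - 1)² + 4X = (X + 1)²`, expanded as `∑ᵢ C(m,i) (4X)^{m-i} (X - 1)^{2(m+i)} = (X² - 1)^{2m}`,
becomes `∑ᵢ C(m,i) c(n,m+i) = 4^{n-m} c(n,m)`, the entrywise form of `UL = DU`. Truncating the
sum at `k ≤ N` loses nothing, because `c(n,k) = 0` for `k > n`: the `2k`-th finite difference of a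
polynomial of degree `2n < 2k` vanishes.
-/

/-- The coefficients c(n,k). -/
def cCoeff (n k : ℕ) : ℚ :=
  (2 / 4 ^ k) * ∑ j ∈ Finset.Icc 1 k,
    (-1 : ℚ) ^ (k - j) * ((2 * k).choose (k - j)) * (2 * j : ℚ) ^ (2 * n)

/-- u(n,k) = ((−1)^n/(2n)!) c(n,k). -/
def uEnt (n k : ℕ) : ℚ := (-1 : ℚ) ^ n / ((2 * n).factorial : ℚ) * cCoeff n k

open Finset Polynomial

namespace Polynomial

variable {R : Type*} [CommRing R]

theorem coeff_X_sub_one_pow (r e : ℕ) :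
    ((X - 1 : R[X]) ^ r).coeff e = (-1) ^ (r - e) * r.choose e := by
  rw [sub_eq_add_neg, ← C_1, ← C_neg, coeff_X_add_C_pow]

noncomputable def coeffMoment (j : ℕ) (s : R) : R[X] →ₗ[R] R :=
  lsum fun e => ((e : R) - s) ^ j • LinearMap.id

variable {j : ℕ} {s : R}

theorem coeffMoment_apply (P : R[X]) :
    coeffMoment j s P = P.sum fun e a => a * ((e : R) - s) ^ j := by
  simp [coeffMoment, mul_comm]

theorem coeffMoment_monomial (e : ℕ) (a : R) :
    coeffMoment j s (monomial e a) = a * ((e : R) - s) ^ j := by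
  rw [coeffMoment_apply, sum_monomial_index _ _ (by simp)]

theorem coeffMoment_X_pow_mul (k : ℕ) (P : R[X]) :
    coeffMoment j (s + k) (X ^ k * P) = coeffMoment j s P := by
  induction P using Polynomial.induction_on' with
  | add P Q hP hQ => rw [mul_add, map_add, map_add, hP, hQ]
  | monomial e a =>
    rw [X_pow_mul_monomial, coeffMoment_monomial, coeffMoment_monomial]
    push_cast
    ring

theorem coeffMoment_expand (p : ℕ) (P : R[X]) :
    coeffMoment j (p * s) (expand R p P) = (p : R) ^ j * coeffMoment j s P := by
  induction P using Polynomial.induction_on' with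
  | add P Q hP hQ => rw [map_add, map_add, map_add, hP, hQ, mul_add]
  | monomial e a =>
    rw [expand_monomial, coeffMoment_monomial, coeffMoment_monomial]
    push_cast
    rw [mul_left_comm, ← mul_pow]
    ring

theorem natDegree_X_sub_one_pow_le (r : ℕ) : ((X - 1 : R[X]) ^ r).natDegree ≤ r := by
  simpa using natDegree_pow_le_of_le r (natDegree_X_sub_C_le (1 : R))

theorem coeffMoment_X_sub_one_pow_of_lt {r : ℕ} (h : j < r) :
    coeffMoment j s ((X - 1 : R[X]) ^ r) = 0 := by
  have hΔ := congr_fun (fwdDiff_iter_pow_eq_zero_of_lt (R := R) h) (-s)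
  rw [fwdDiff_iter_eq_sum_shift] at hΔ
  rw [coeffMoment_apply, sum_over_range' _ (by simp) (r + 1)]
  · rw [Pi.zero_apply] at hΔ
    rw [← hΔ]
    refine sum_congr rfl fun e _ => ?_
    rw [coeff_X_sub_one_pow]
    simp only [nsmul_eq_mul, mul_one, zsmul_eq_mul, Int.cast_mul, Int.cast_pow, Int.cast_neg,
      Int.cast_one, Int.cast_natCast]
    ring
  · exact Nat.lt_succ_of_le (natDegree_X_sub_one_pow_le r)

theorem sum_choose_smul_eq_expand_X_sub_one_pow (m : ℕ) :
    ∑ i ∈ range (m + 1),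
        ((m.choose i : R) * 4 ^ (m - i)) • (X ^ (m - i) * (X - 1 : R[X]) ^ (2 * (m + i)))
      = expand R 2 ((X - 1) ^ (2 * m)) := by
  have hsq : (X - 1 : R[X]) ^ 2 * ((X - 1) ^ 2 + 4 * X) = (X ^ 2 - 1) ^ 2 := by ring
  rw [map_pow, map_sub, expand_X, map_one, pow_mul, ← hsq, mul_pow, add_pow, mul_sum]
  refine sum_congr rfl fun i _ => ?_
  rw [smul_eq_C_mul, map_mul, map_pow, map_natCast, map_ofNat]
  generalize (X - 1 : R[X]) = Y
  ring

end Polynomial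

theorem Finset.sum_range_two_mul_add_one {M : Type*} [AddCommMonoid M] (g : ℕ → M) (k : ℕ) :
    ∑ e ∈ range (2 * k + 1), g e = g k + ∑ j ∈ Icc 1 k, (g (k - j) + g (k + j)) := by
  rw [two_mul, add_assoc, sum_range_add, sum_range_succ', ← sum_range_reflect, sum_add_distrib,
    ← Ico_add_one_right_eq_Icc, sum_Ico_eq_sum_range, sum_Ico_eq_sum_range]
  simp only [Nat.add_sub_cancel, Nat.sub_sub, add_comm 1, add_zero]
  abel

theorem cCoeff_eq_coeffMoment {n : ℕ} (hn : n ≠ 0) (k : ℕ) :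
    cCoeff n k = 4 ^ n / 4 ^ k * coeffMoment (2 * n) (k : ℚ) ((X - 1) ^ (2 * k)) := by
  rw [coeffMoment_apply, sum_over_range' _ (by simp) (2 * k + 1), sum_range_two_mul_add_one,
    sub_self, zero_pow (by positivity), mul_zero, zero_add, cCoeff, mul_sum, mul_sum]
  · refine sum_congr rfl fun j hj => ?_
    have hjk : j ≤ k := (mem_Icc.mp hj).2
    rw [coeff_X_sub_one_pow, coeff_X_sub_one_pow,
      Nat.choose_symm_of_eq_add (by omega : 2 * k = (k + j) + (k - j)),
      show 2 * k - (k - j) = (k - j) + 2 * j by omega, show 2 * k - (k + j) = k - j by omega,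
      Nat.cast_sub hjk, pow_add]
    push_cast
    simp only [pow_mul, neg_one_sq, one_pow]
    ring
  · exact Nat.lt_succ_of_le (natDegree_X_sub_one_pow_le _)

theorem cCoeff_eq_zero_of_lt {n k : ℕ} (hn : n ≠ 0) (h : n < k) : cCoeff n k = 0 := by
  rw [cCoeff_eq_coeffMoment hn, coeffMoment_X_sub_one_pow_of_lt (by omega), mul_zero]

theorem sum_choose_mul_cCoeff {n : ℕ} (hn : n ≠ 0) (m : ℕ) :
    2 ^ (2 * m + 1) * ∑ i ∈ range (m + 1), (m.choose i : ℚ) * cCoeff n (m + i)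
      = 2 ^ (2 * n + 1) * cCoeff n m := by
  set M : ℕ → ℚ := fun k => coeffMoment (2 * n) (k : ℚ) ((X - 1) ^ (2 * k))
  have hc : ∀ k, cCoeff n k = 4 ^ n / 4 ^ k * M k := cCoeff_eq_coeffMoment hn
  have hmoment :
      ∑ i ∈ range (m + 1), (m.choose i : ℚ) * 4 ^ (m - i) * M (m + i) = 4 ^ n * M m :=
    calc ∑ i ∈ range (m + 1), (m.choose i : ℚ) * 4 ^ (m - i) * M (m + i)
        = coeffMoment (2 * n) ((2 * m : ℕ) : ℚ) (∑ i ∈ range (m + 1),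
            ((m.choose i : ℚ) * 4 ^ (m - i)) • (X ^ (m - i) * (X - 1 : ℚ[X]) ^ (2 * (m + i)))) := by
          rw [map_sum]
          refine sum_congr rfl fun i hi => ?_
          have hi : i ≤ m := Nat.lt_succ_iff.mp (mem_range.mp hi)
          rw [map_smul, smul_eq_mul, show 2 * m = (m + i) + (m - i) by omega, Nat.cast_add,
            coeffMoment_X_pow_mul]
      _ = coeffMoment (2 * n) ((2 : ℕ) * (m : ℚ)) (expand ℚ 2 ((X - 1) ^ (2 * m))) := by
          rw [sum_choose_smul_eq_expand_X_sub_one_pow, Nat.cast_mul]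
      _ = 4 ^ n * M m := by
          rw [coeffMoment_expand, pow_mul]
          norm_num
          rfl
  have hterm : ∀ i ∈ range (m + 1), (m.choose i : ℚ) * cCoeff n (m + i)
      = 4 ^ n / 4 ^ (2 * m) * ((m.choose i : ℚ) * 4 ^ (m - i) * M (m + i)) := by
    intro i hi
    have hi : i ≤ m := Nat.lt_succ_iff.mp (mem_range.mp hi)
    have h4 : (4 : ℚ) ^ (2 * m) = 4 ^ (m - i) * 4 ^ (m + i) := by rw [← pow_add]; congr 1; omega
    rw [hc, h4]
    field_simp
  have hpow : ∀ k, (2 : ℚ) ^ (2 * k + 1) = 2 * 4 ^ k := fun k => by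
    rw [pow_succ, pow_mul]; norm_num; ring
  rw [sum_congr rfl hterm, ← mul_sum, hmoment, hc, hpow, hpow]
  field_simp
  ring

theorem sum_uEnt_mul_choose_eq {n N : ℕ} (hn : n ≠ 0) (hnN : n ≤ N) (m : ℕ) :
    ∑ k ∈ range N, uEnt n (k + 1) *
        (if m ≤ k ∧ k + 1 ≤ 2 * (m + 1) then
          (2 : ℚ) ^ (2 * (m + 1) + 1) * ((m + 1).choose (k - m) : ℚ) else 0)
      = 2 ^ (2 * n + 1) * uEnt n (m + 1) := by
  set f : ℕ → ℚ := fun k => uEnt n (k + 1) *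
    (if m ≤ k ∧ k + 1 ≤ 2 * (m + 1) then
      (2 : ℚ) ^ (2 * (m + 1) + 1) * ((m + 1).choose (k - m) : ℚ) else 0)
  have hf_band : ∀ k, ¬(m ≤ k ∧ k + 1 ≤ 2 * (m + 1)) → f k = 0 := fun k hk => by
    simp only [f, if_neg hk, mul_zero]
  have hf_large : ∀ k, N ≤ k → f k = 0 := fun k hk => by
    simp only [f, uEnt, cCoeff_eq_zero_of_lt hn (by omega : n < k + 1), mul_zero, zero_mul]
  calc ∑ k ∈ range N, f k
      = ∑ k ∈ range (N + (2 * m + 2)), f k :=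
        sum_subset (range_subset_range.mpr (by omega)) fun k _ hk =>
          hf_large k (by simpa using hk)
    _ = ∑ k ∈ Ico m (2 * m + 2), f k :=
        (sum_subset (fun k hk => by simp only [mem_Ico, mem_range] at hk ⊢; omega) fun k _ hk =>
          hf_band k (by simp only [mem_Ico, not_and, not_lt] at hk; omega)).symm
    _ = ∑ i ∈ range (m + 1 + 1), f (m + i) := by
        rw [sum_Ico_eq_sum_range, show 2 * m + 2 - m = m + 1 + 1 by omega]
    _ = (-1) ^ n / ((2 * n).factorial : ℚ) *
          (2 ^ (2 * (m + 1) + 1) *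
            ∑ i ∈ range (m + 1 + 1), ((m + 1).choose i : ℚ) * cCoeff n (m + 1 + i)) := by
        rw [mul_sum, mul_sum]
        refine sum_congr rfl fun i hi => ?_
        have hi : i ≤ m + 1 := Nat.lt_succ_iff.mp (mem_range.mp hi)
        simp only [f]
        rw [if_pos (show m ≤ m + i ∧ m + i + 1 ≤ 2 * (m + 1) by omega), Nat.add_sub_cancel_left,
          show m + i + 1 = m + 1 + i by omega, uEnt]
        ring
    _ = 2 ^ (2 * n + 1) * uEnt n (m + 1) := by
        rw [sum_choose_mul_cCoeff hn, uEnt]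
        ring

theorem stmt_16_general (N : ℕ) :
    let U : Matrix (Fin N) (Fin N) ℚ :=
      fun n k => uEnt ((n : ℕ) + 1) ((k : ℕ) + 1)
    let L : Matrix (Fin N) (Fin N) ℚ :=
      fun n k =>
        if (k : ℕ) ≤ (n : ℕ) ∧ (n : ℕ) + 1 ≤ 2 * ((k : ℕ) + 1) then
          2 ^ (2 * ((k : ℕ) + 1) + 1) * (((k : ℕ) + 1).choose ((n : ℕ) - (k : ℕ)))
        else 0
    let D : Matrix (Fin N) (Fin N) ℚ :=
      Matrix.diagonal fun i => 2 ^ (2 * ((i : ℕ) + 1) + 1)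
    U * L = D * U := by
  intro U L D
  ext n m
  rw [Matrix.mul_apply, Matrix.diagonal_mul]
  exact (Fin.sum_univ_eq_sum_range _ N).trans
    (sum_uEnt_mul_choose_eq (Nat.succ_ne_zero _) n.isLt m)

theorem stmt_16 (N : ℕ) (hN : 1 ≤ N) :
    let U : Matrix (Fin N) (Fin N) ℚ :=
      fun n k => uEnt ((n : ℕ) + 1) ((k : ℕ) + 1)
    let L : Matrix (Fin N) (Fin N) ℚ :=
      fun n k =>
        if (k : ℕ) ≤ (n : ℕ) ∧ (n : ℕ) + 1 ≤ 2 * ((k : ℕ) + 1) then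
          2 ^ (2 * ((k : ℕ) + 1) + 1) * (((k : ℕ) + 1).choose ((n : ℕ) - (k : ℕ)))
        else 0
    let D : Matrix (Fin N) (Fin N) ℚ :=
      Matrix.diagonal fun i => 2 ^ (2 * ((i : ℕ) + 1) + 1)
    U * L = D * U :=
  stmt_16_general N
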